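/- arXiv:2501.15213 — 2 statements merged into one kernel-verified Lean document; each statement's English description precedes it below -/
import Mathlib

section
/- Let H be the theta group (stabilizer of the zero characteristic in G = Sp(g,F_2)) and epsilon_H = epsilon_0 its quadratic character. The induced representation Ind_H^G(epsilon_H) is either irreducible or decomposes into exactly two non-isomorphic irreducible components; equivalently dim Hom_G(Ind_H^G(epsilon_H), Ind_H^G(epsilon_H)) <= 2. -/
open Matrix BigOperators

/-- A characteristic: a vector in `F₂^{2g}`, indexed by `Fin g ⊕ Fin g`
(the first block is `a`, the second is `b`). -/
abbrev Char2 (g : ℕ) := (Fin g ⊕ Fin g) → ZMod 2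

/-- The `a`-part of a characteristic. -/
def aPart {g : ℕ} (m : Char2 g) : Fin g → ZMod 2 := fun i => m (Sum.inl i)

/-- The `b`-part of a characteristic. -/
def bPart {g : ℕ} (m : Char2 g) : Fin g → ZMod 2 := fun i => m (Sum.inr i)

/-- A characteristic `m = (a;b)` is even if `a'b = 0`. -/
def IsEvenChar {g : ℕ} (m : Char2 g) : Prop := aPart m ⬝ᵥ bPart m = 0

/-- A characteristic `m = (a;b)` is odd if `a'b = 1`. -/
def IsOddChar {g : ℕ} (m : Char2 g) : Prop := aPart m ⬝ᵥ bPart m = 1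

instance {g : ℕ} : DecidablePred (IsEvenChar (g := g)) := fun m => by
  unfold IsEvenChar; infer_instance

instance {g : ℕ} : DecidablePred (IsOddChar (g := g)) := fun m => by
  unfold IsOddChar; infer_instance

/-- The type of `2g × 2g` matrices over `F₂`. -/
abbrev SpMat (g : ℕ) := Matrix (Fin g ⊕ Fin g) (Fin g ⊕ Fin g) (ZMod 2)

/-- The offset `((CD')₀ ; (AB')₀)` appearing in the affine action. -/
def offVec {g : ℕ} (σ : SpMat g) : Char2 g :=
  Sum.elim (Matrix.diag (σ.toBlocks₂₁ * (σ.toBlocks₂₂)ᵀ))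
           (Matrix.diag (σ.toBlocks₁₁ * (σ.toBlocks₁₂)ᵀ))

/-- The affine action `σ{m} = (σ')⁻¹ m + ((CD')₀ ; (AB')₀)`. -/
noncomputable def affAct {g : ℕ} (σ : SpMat g) (m : Char2 g) : Char2 g :=
  (σᵀ)⁻¹ *ᵥ m + offVec σ

/-- The sign `(-1)^x` for `x : F₂`. -/
def sgn2 (x : ZMod 2) : ℤ := if x = 0 then 1 else -1

/-- The quadratic form `M[x] = x' M x`. -/
def quadF {g : ℕ} (M : Matrix (Fin g) (Fin g) (ZMod 2)) (x : Fin g → ZMod 2) : ZMod 2 :=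
  x ⬝ᵥ (M *ᵥ x)

/-- `ε_m(σ) = (-1)^{tr(B'C) + (B'D)[a] + (A'C)[b]}`. -/
def epsChar {g : ℕ} (m : Char2 g) (σ : SpMat g) : ℤ :=
  sgn2 (Matrix.trace ((σ.toBlocks₁₂)ᵀ * σ.toBlocks₂₁)
    + quadF ((σ.toBlocks₁₂)ᵀ * σ.toBlocks₂₂) (aPart m)
    + quadF ((σ.toBlocks₁₁)ᵀ * σ.toBlocks₂₁) (bPart m))

/-- The symplectic pairing `<m,n> = a'β + b'α`. -/
def pairing {g : ℕ} (m n : Char2 g) : ZMod 2 :=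
  aPart m ⬝ᵥ bPart n + bPart m ⬝ᵥ aPart n

/-- `e(m,n) = (-1)^{<m,n>}`. -/
def eSign {g : ℕ} (m n : Char2 g) : ℤ := sgn2 (pairing m n)

/-- The symplectic group `Sp(g, F₂)` as a group. -/
abbrev SpGrp (g : ℕ) := ↥(Matrix.symplecticGroup (Fin g) (ZMod 2))

/-- The stabilizer `H(m)` of the characteristic `m` under the affine action,
as a subset of `Sp(g, F₂)`. -/
def stabSet (g : ℕ) (m : Char2 g) : Set (SpGrp g) :=
  {σ | affAct (σ : SpMat g) m = m}

/-- The induced representation space `Ind_{H(m)}^G(ε_m)`: functions `f : G → ℂ`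
with `f(hx) = ε_m(h) f(x)` for `h ∈ H(m)`; `G` acts by right translation. -/
noncomputable def IndEps (g : ℕ) (m : Char2 g) : Submodule ℂ (SpGrp g → ℂ) where
  carrier := {f | ∀ h x : SpGrp g, h ∈ stabSet g m →
    f (h * x) = ((epsChar m (h : SpMat g) : ℤ) : ℂ) * f x}
  add_mem' := by
    intro f f' hf hf' h x hh
    simp only [Pi.add_apply, hf h x hh, hf' h x hh]
    ring
  zero_mem' := by
    intro h x hh
    simp
  smul_mem' := by
    intro c f hf h x hh
    simp only [Pi.smul_apply, smul_eq_mul, hf h x hh]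
    ring

/-- Right translation by `σ` on `Ind_{H(m)}^G(ε_m)`. -/
noncomputable def rTrans (g : ℕ) (m : Char2 g) (σ : SpGrp g) :
    IndEps g m →ₗ[ℂ] IndEps g m where
  toFun f := ⟨fun x => f.1 (x * σ), by
    intro h x hh
    simpa [mul_assoc] using f.2 h (x * σ) hh⟩
  map_add' f f' := rfl
  map_smul' c f := rfl

/-- A `G`-equivariant endomorphism of `Ind_{H(m)}^G(ε_m)`: one commuting with
all right translations. -/
def IsEquivariant (g : ℕ) (m : Char2 g) (φ : IndEps g m →ₗ[ℂ] IndEps g m) : Prop :=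
  ∀ σ : SpGrp g, φ ∘ₗ rTrans g m σ = rTrans g m σ ∘ₗ φ

/-!
An equivariant endomorphism `ψ` of `Ind_H^G(ε)` is determined by `w = ψ F`, where `F` is `ε`
extended by zero off `H`: the right translates of `F` span the induced space. As `w` transforms
by `ε` under `H` on both sides, it is determined by its values on representatives of `H \ G / H`,
and there are at most two double cosets. Indeed `σ{0} = offVec σ` is an even characteristic, and
for symplectic `σ` the parity `q(a;b) = a'b` satisfies `q(σ'm) = q(m) + <σ{0}, m>`, so the
elements of `H` are exactly the transposes of the `q`-isometries `M`, acting on characteristics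
by `M⁻¹`. Products of two transvections are `q`-isometries moving any nonzero isotropic vector to
any other, so every `σ ∉ H` lies in `H τ H` for a fixed `τ ∉ H`. Hence `ψ ↦ (w 1, w τ)` is
injective on `Hom_G`.
-/

theorem ZMod.mul_self_of_two (x : ZMod 2) : x * x = x := by
  rw [← sq, ZMod.pow_card]

theorem ZMod.eq_zero_or_eq_one_of_two (x : ZMod 2) : x = 0 ∨ x = 1 := by
  revert x; decide

theorem CharTwo.sum_sum_eq_sum_diag_of_symm {n R : Type*} [Fintype n] [Semiring R] [CharP R 2]
    (f : n → n → R) (hf : ∀ i j, f i j = f j i) : ∑ i, ∑ j, f i j = ∑ i, f i i := by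
  classical
  have hoff : ∑ p ∈ (Finset.univ : Finset n).offDiag, f p.1 p.2 = 0 := by
    refine Finset.sum_involution (fun p _ => p.swap) (fun p _ => ?_) (fun p hp _ => ?_)
      (fun p hp => ?_) (fun p _ => p.swap_swap)
    · rw [Prod.fst_swap, Prod.snd_swap, hf p.2, CharTwo.add_self_eq_zero]
    · exact fun h => (Finset.mem_offDiag.mp hp).2.2 (congrArg Prod.fst h).symm
    · simp only [Finset.mem_offDiag, Prod.fst_swap, Prod.snd_swap] at hp ⊢
      exact ⟨hp.2.1, hp.1, Ne.symm hp.2.2⟩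
  rw [← Finset.sum_product', ← Finset.diag_union_offDiag,
    Finset.sum_union (Finset.disjoint_diag_offDiag _), hoff, add_zero, Finset.sum_diag]

namespace Matrix

theorem neg_eq_self_of_charTwo {m n R : Type*} [Ring R] [CharP R 2] (X : Matrix m n R) :
    -X = X := by
  ext i j; exact CharTwo.neg_eq _

section

variable {n R : Type*} [Fintype n]

theorem trace_mul_eq_diag_dotProduct_diag [CommRing R] [CharP R 2] {S T : Matrix n n R}
    (hS : S.IsSymm) (hT : T.IsSymm) : trace (S * T) = diag S ⬝ᵥ diag T := by
  simp only [trace, diag, mul_apply, dotProduct]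
  exact CharTwo.sum_sum_eq_sum_diag_of_symm _ fun i j => by rw [hS.apply j i, hT.apply i j]

theorem dotProduct_mulVec_self_of_isSymm {S : Matrix n n (ZMod 2)} (hS : S.IsSymm)
    (x : n → ZMod 2) : x ⬝ᵥ S *ᵥ x = diag S ⬝ᵥ x := by
  calc x ⬝ᵥ S *ᵥ x = ∑ i, ∑ j, x i * S i j * x j := by
        simp only [dotProduct, mulVec, Finset.mul_sum, mul_assoc]
    _ = ∑ i, x i * S i i * x i :=
        CharTwo.sum_sum_eq_sum_diag_of_symm _ fun i j => by rw [hS.apply i j]; ring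
    _ = diag S ⬝ᵥ x := Finset.sum_congr rfl fun i _ => by
        rw [mul_comm (x i), mul_assoc, ZMod.mul_self_of_two, diag]

theorem trace_mul_self_of_zmod_two (X : Matrix n n (ZMod 2)) : trace (X * X) = trace X := by
  simp only [trace, diag, mul_apply]
  rw [CharTwo.sum_sum_eq_sum_diag_of_symm _ fun i j => mul_comm _ _]
  simp only [ZMod.mul_self_of_two]

variable [CommRing R]

theorem ext_of_dotProduct_mulVec [DecidableEq n] {P Q : Matrix n n R}
    (h : ∀ x y, x ⬝ᵥ P *ᵥ y = x ⬝ᵥ Q *ᵥ y) : P = Q := by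
  ext i j
  simpa using h (Pi.single i 1) (Pi.single j 1)

theorem transpose_mulVec_dotProduct_transpose_mulVec (X Y : Matrix n n R) (x y : n → R) :
    Xᵀ *ᵥ x ⬝ᵥ Yᵀ *ᵥ y = x ⬝ᵥ (X * Yᵀ) *ᵥ y := by
  rw [mulVec_transpose X, ← dotProduct_mulVec, mulVec_mulVec]

theorem dotProduct_mulVec_comm (M : Matrix n n R) (x y : n → R) :
    x ⬝ᵥ M *ᵥ y = y ⬝ᵥ Mᵀ *ᵥ x := by
  rw [dotProduct_mulVec, dotProduct_comm, mulVec_transpose]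

end

variable {l R : Type*} [DecidableEq l] [CommRing R] [CharP R 2]

theorem J_eq_fromBlocks_of_charTwo : J l R = fromBlocks 0 1 1 0 := by
  rw [J, neg_eq_self_of_charTwo]

variable [Fintype l]

theorem J_mul_mul_J_of_charTwo (A : Matrix (l ⊕ l) (l ⊕ l) R) :
    J l R * A * J l R = A.submatrix Sum.swap Sum.swap := by
  rw [← fromBlocks_toBlocks A, J_eq_fromBlocks_of_charTwo, fromBlocks_submatrix_sum_swap_sum_swap]
  simp [fromBlocks_multiply]

theorem J_mulVec_of_charTwo (v : l ⊕ l → R) : J l R *ᵥ v = v ∘ Sum.swap := by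
  rw [J_eq_fromBlocks_of_charTwo, fromBlocks_mulVec]
  ext (i | i) <;> simp

end Matrix

namespace SymplecticGroup

variable {l R : Type*} [Fintype l] [DecidableEq l] [CommRing R] [CharP R 2]

theorem fromBlocks_mul_transpose_of_mem {A B C D : Matrix l l R}
    (h : fromBlocks A B C D ∈ symplecticGroup l R) :
    (A * Bᵀ).IsSymm ∧ (C * Dᵀ).IsSymm ∧ A * Dᵀ + B * Cᵀ = 1 := by
  have hT := transpose_mem h
  rw [fromBlocks_transpose, fromBlocks_mem_iff] at hT
  simp only [transpose_transpose, sub_eq_add_neg, neg_eq_self_of_charTwo] at hT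
  refine ⟨?_, ?_, hT.2.2⟩
  · rw [IsSymm, transpose_mul, transpose_transpose]; exact hT.1.symm
  · rw [IsSymm, transpose_mul, transpose_transpose]; exact hT.2.1.symm

theorem fromBlocks_transpose_mul_of_mem {A B C D : Matrix l l R}
    (h : fromBlocks A B C D ∈ symplecticGroup l R) :
    (Aᵀ * C).IsSymm ∧ (Bᵀ * D).IsSymm ∧ Aᵀ * D + Cᵀ * B = 1 := by
  have hT := transpose_mem h
  rw [fromBlocks_transpose] at hT
  simpa only [transpose_transpose] using fromBlocks_mul_transpose_of_mem hT

theorem transpose_inv_eq_submatrix_swap {A : Matrix (l ⊕ l) (l ⊕ l) R}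
    (h : A ∈ symplecticGroup l R) : (Aᵀ)⁻¹ = A.submatrix Sum.swap Sum.swap := by
  refine inv_eq_right_inv ?_
  rw [← J_mul_mul_J_of_charTwo, ← Matrix.mul_assoc, ← Matrix.mul_assoc, mem_iff'.mp h,
    J_squared, neg_eq_self_of_charTwo]

theorem trace_offDiag_blocks_mul {A₁ B₁ C₁ D₁ A₂ B₂ C₂ D₂ : Matrix l l R}
    (h₁ : fromBlocks A₁ B₁ C₁ D₁ ∈ symplecticGroup l R)
    (h₂ : fromBlocks A₂ B₂ C₂ D₂ ∈ symplecticGroup l R)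
    (hAB : diag (A₂ * B₂ᵀ) = 0) (hCD : diag (C₂ * D₂ᵀ) = 0) :
    trace ((A₁ * B₂ + B₁ * D₂)ᵀ * (C₁ * A₂ + D₁ * C₂))
      = trace (B₁ᵀ * C₁) + trace (B₂ᵀ * C₂) := by
  obtain ⟨hAC₁, hBD₁, hAD₁⟩ := fromBlocks_transpose_mul_of_mem h₁
  obtain ⟨hAB₂, hCD₂, hAD₂⟩ := fromBlocks_mul_transpose_of_mem h₂
  have rotate (P Q S T : Matrix l l R) : trace (P * (Q * (S * T))) = trace (T * P * (Q * S)) := by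
    simp only [← Matrix.mul_assoc]
    rw [trace_mul_comm]
    simp only [Matrix.mul_assoc]
  have hcancel : trace (C₂ * B₂ᵀ * (C₁ᵀ * B₁)) = trace (B₂ * C₂ᵀ * (B₁ᵀ * C₁)) := by
    rw [← trace_transpose, trace_mul_comm]
    simp only [transpose_mul, transpose_transpose]
  simp only [transpose_add, transpose_mul, Matrix.add_mul, Matrix.mul_add, trace_add,
    Matrix.mul_assoc]
  rw [rotate, rotate, rotate, rotate, eq_sub_of_add_eq hAD₁, eq_sub_of_add_eq hAD₂,
    sub_eq_add_neg, sub_eq_add_neg, neg_eq_self_of_charTwo, neg_eq_self_of_charTwo,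
    trace_mul_eq_diag_dotProduct_diag hAB₂ hAC₁, trace_mul_eq_diag_dotProduct_diag hCD₂ hBD₁,
    hAB, hCD, Matrix.add_mul, Matrix.mul_add, Matrix.one_mul, Matrix.mul_one, trace_add, trace_add,
    hcancel, trace_mul_comm C₂]
  simp only [zero_dotProduct]
  linear_combination trace (B₂ * C₂ᵀ * (B₁ᵀ * C₁)) * CharTwo.two_eq_zero (R := R)

end SymplecticGroup

section Characteristics

variable {g : ℕ}

def charParity (m : Char2 g) : ZMod 2 := aPart m ⬝ᵥ bPart m

theorem charParity_sumElim (a b : Fin g → ZMod 2) : charParity (Sum.elim a b) = a ⬝ᵥ b := rfl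

theorem pairing_sumElim (a b c d : Fin g → ZMod 2) :
    pairing (Sum.elim a b) (Sum.elim c d) = a ⬝ᵥ d + b ⬝ᵥ c := rfl

theorem pairing_eq_dotProduct_swap (x y : Char2 g) : pairing x y = x ⬝ᵥ (y ∘ Sum.swap) := by
  simp only [pairing, dotProduct, Fintype.sum_sum_type, aPart, bPart, Function.comp_apply,
    Sum.swap_inl, Sum.swap_inr]

theorem pairing_eq_dotProduct_J_mulVec (x y : Char2 g) :
    pairing x y = x ⬝ᵥ J (Fin g) (ZMod 2) *ᵥ y := by
  rw [J_mulVec_of_charTwo, pairing_eq_dotProduct_swap]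

theorem pairing_comm (x y : Char2 g) : pairing x y = pairing y x := by
  rw [pairing, pairing, dotProduct_comm (aPart x), dotProduct_comm (bPart x), add_comm]

theorem pairing_add_right (x y z : Char2 g) : pairing x (y + z) = pairing x y + pairing x z := by
  simp only [pairing_eq_dotProduct_swap, Pi.add_comp, dotProduct_add]

theorem pairing_self (x : Char2 g) : pairing x x = 0 := by
  rw [pairing, dotProduct_comm, CharTwo.add_self_eq_zero]

theorem eq_zero_of_forall_pairing_eq_zero {v : Char2 g} (h : ∀ m, pairing v m = 0) : v = 0 := by
  ext k
  have hk := h (Pi.single k 1 ∘ Sum.swap)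
  rwa [pairing_eq_dotProduct_swap, Function.comp_assoc, Sum.swap_swap_eq, Function.comp_id,
    dotProduct_single, mul_one] at hk

theorem exists_pairing_eq_one {u : Char2 g} (hu : u ≠ 0) : ∃ x, pairing u x = 1 := by
  by_contra! h
  exact hu (eq_zero_of_forall_pairing_eq_zero fun m =>
    (ZMod.eq_zero_or_eq_one_of_two _).resolve_right (h m))

theorem charParity_add (x y : Char2 g) :
    charParity (x + y) = charParity x + charParity y + pairing x y := by
  change (aPart x + aPart y) ⬝ᵥ (bPart x + bPart y) = _
  rw [charParity, charParity, pairing, add_dotProduct, dotProduct_add, dotProduct_add,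
    dotProduct_comm (aPart y) (bPart x)]
  ring

theorem offVec_fromBlocks (A B C D : Matrix (Fin g) (Fin g) (ZMod 2)) :
    offVec (fromBlocks A B C D) = Sum.elim (diag (C * Dᵀ)) (diag (A * Bᵀ)) := by
  simp only [offVec, toBlocks_fromBlocks₁₁, toBlocks_fromBlocks₁₂, toBlocks_fromBlocks₂₁,
    toBlocks_fromBlocks₂₂]

theorem offVec_apply (σ : SpMat g) (k : Fin g ⊕ Fin g) : offVec σ k = charParity (σ k.swap) := by
  cases k <;> simp [offVec, charParity, diag, mul_apply, dotProduct, aPart, bPart, toBlocks₁₁,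
    toBlocks₁₂, toBlocks₂₁, toBlocks₂₂]

theorem charParity_transpose_mulVec {σ : SpMat g} (hσ : σ ∈ symplecticGroup (Fin g) (ZMod 2))
    (m : Char2 g) : charParity (σᵀ *ᵥ m) = charParity m + pairing (offVec σ) m := by
  rw [← fromBlocks_toBlocks σ] at hσ ⊢
  obtain ⟨hAB, hCD, hAD⟩ := SymplecticGroup.fromBlocks_mul_transpose_of_mem hσ
  rw [← Sum.elim_comp_inl_inr m, fromBlocks_transpose, fromBlocks_mulVec, offVec_fromBlocks]
  simp only [Sum.elim_comp_inl, Sum.elim_comp_inr, charParity_sumElim, pairing_sumElim,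
    add_dotProduct, dotProduct_add, transpose_mulVec_dotProduct_transpose_mulVec,
    dotProduct_mulVec_self_of_isSymm hAB, dotProduct_mulVec_self_of_isSymm hCD]
  set a := m ∘ Sum.inl
  set b := m ∘ Sum.inr
  have hcross : a ⬝ᵥ (σ.toBlocks₁₁ * σ.toBlocks₂₂ᵀ) *ᵥ b
      + b ⬝ᵥ (σ.toBlocks₂₁ * σ.toBlocks₁₂ᵀ) *ᵥ a = a ⬝ᵥ b := by
    rw [dotProduct_mulVec_comm _ b, transpose_mul, transpose_transpose, ← dotProduct_add,
      ← add_mulVec, hAD, one_mulVec]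
  linear_combination hcross

theorem isEvenChar_offVec {σ : SpMat g} (hσ : σ ∈ symplecticGroup (Fin g) (ZMod 2)) :
    IsEvenChar (offVec σ) := by
  rw [← fromBlocks_toBlocks σ] at hσ ⊢
  obtain ⟨hAB, hCD, -⟩ := SymplecticGroup.fromBlocks_mul_transpose_of_mem hσ
  obtain ⟨-, -, hAD⟩ := SymplecticGroup.fromBlocks_transpose_mul_of_mem hσ
  have hBC : σ.toBlocks₁₂ᵀ * σ.toBlocks₂₁ = 1 + σ.toBlocks₂₂ᵀ * σ.toBlocks₁₁ := by
    have hDA := congrArg transpose hAD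
    simp only [transpose_add, transpose_mul, transpose_transpose, transpose_one] at hDA
    rw [eq_sub_of_add_eq' hDA, sub_eq_add_neg, neg_eq_self_of_charTwo]
  rw [IsEvenChar, offVec_fromBlocks]
  change diag (_ * _) ⬝ᵥ diag (_ * _) = 0
  rw [← trace_mul_eq_diag_dotProduct_diag hCD hAB, Matrix.mul_assoc, trace_mul_comm,
    Matrix.mul_assoc, Matrix.mul_assoc, hBC, ← Matrix.mul_assoc, Matrix.mul_add, Matrix.mul_one,
    trace_add, trace_mul_self_of_zmod_two, CharTwo.add_self_eq_zero]

end Characteristics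

section AffineAction

variable {g : ℕ}

theorem transpose_inv_mulVec_apply {σ : SpMat g} (hσ : σ ∈ symplecticGroup (Fin g) (ZMod 2))
    (v : Char2 g) (k : Fin g ⊕ Fin g) : ((σᵀ)⁻¹ *ᵥ v) k = pairing (σ k.swap) v := by
  rw [SymplecticGroup.transpose_inv_eq_submatrix_swap hσ, pairing_eq_dotProduct_swap,
    show (Sum.swap : Fin g ⊕ Fin g → _) = Equiv.sumComm _ _ from rfl, submatrix_mulVec_equiv]
  rfl

theorem offVec_mul {σ τ : SpMat g} (hσ : σ ∈ symplecticGroup (Fin g) (ZMod 2))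
    (hτ : τ ∈ symplecticGroup (Fin g) (ZMod 2)) :
    offVec (σ * τ) = (σᵀ)⁻¹ *ᵥ offVec τ + offVec σ := by
  ext k
  rw [Pi.add_apply, offVec_apply, mul_apply_eq_vecMul, ← mulVec_transpose,
    charParity_transpose_mulVec hτ, transpose_inv_mulVec_apply hσ, offVec_apply, pairing_comm]
  ring

theorem offVec_one : offVec (1 : SpMat g) = 0 := by
  rw [← fromBlocks_one, offVec_fromBlocks]
  ext (i | i) <;> simp

theorem affAct_zero (σ : SpMat g) : affAct σ 0 = offVec σ := by
  rw [affAct, mulVec_zero, zero_add]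

theorem affAct_one (m : Char2 g) : affAct 1 m = m := by
  rw [affAct, transpose_one, inv_one, one_mulVec, offVec_one, add_zero]

theorem affAct_mul {σ τ : SpMat g} (hσ : σ ∈ symplecticGroup (Fin g) (ZMod 2))
    (hτ : τ ∈ symplecticGroup (Fin g) (ZMod 2)) (m : Char2 g) :
    affAct (σ * τ) m = affAct σ (affAct τ m) := by
  rw [affAct, affAct, affAct, offVec_mul hσ hτ, transpose_mul, Matrix.mul_inv_rev, mulVec_add,
    mulVec_mulVec, add_assoc]

theorem affAct_coe_mul (σ τ : SpGrp g) (m : Char2 g) :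
    affAct ↑(σ * τ) m = affAct σ (affAct τ m) :=
  affAct_mul σ.2 τ.2 m

theorem affAct_coe_inv_affAct (σ : SpGrp g) (m : Char2 g) : affAct ↑σ⁻¹ (affAct σ m) = m := by
  rw [← affAct_coe_mul, inv_mul_cancel, Submonoid.coe_one, affAct_one]

def thetaGroup (g : ℕ) : Subgroup (SpGrp g) where
  carrier := stabSet g 0
  one_mem' := affAct_one 0
  mul_mem' {σ τ} hσ hτ := by
    rw [stabSet, Set.mem_ofPred_eq] at hσ hτ ⊢
    rw [affAct_coe_mul, hτ, hσ]
  inv_mem' {σ} hσ := by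
    rw [stabSet, Set.mem_ofPred_eq] at hσ ⊢
    conv_lhs => rw [← hσ, affAct_coe_inv_affAct]

theorem mem_thetaGroup_iff {σ : SpGrp g} : σ ∈ thetaGroup g ↔ offVec (σ : SpMat g) = 0 := by
  rw [← affAct_zero]; rfl

theorem affAct_of_mem_thetaGroup {h : SpGrp g} (hh : h ∈ thetaGroup g) (m : Char2 g) :
    affAct h m = ((h : SpMat g)ᵀ)⁻¹ *ᵥ m := by
  rw [affAct, mem_thetaGroup_iff.mp hh, add_zero]

end AffineAction

section DoubleCosets

variable {g : ℕ}

def parityIsometries (g : ℕ) : Submonoid (SpMat g) where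
  carrier := {M | ∀ x, charParity (M *ᵥ x) = charParity x}
  one_mem' x := by rw [one_mulVec]
  mul_mem' {M N} hM hN x := by rw [← mulVec_mulVec, hM, hN]

theorem pairing_mulVec_of_mem_parityIsometries {M : SpMat g} (hM : M ∈ parityIsometries g)
    (x y : Char2 g) : pairing (M *ᵥ x) (M *ᵥ y) = pairing x y := by
  have polarize (x y : Char2 g) :
      pairing x y = charParity (x + y) + charParity x + charParity y := by
    rw [charParity_add]
    linear_combination -(charParity x + charParity y) * CharTwo.two_eq_zero (R := ZMod 2)
  rw [polarize, polarize x, ← mulVec_add, hM, hM, hM]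

theorem parityIsometries_le_symplecticGroup :
    parityIsometries g ≤ symplecticGroup (Fin g) (ZMod 2) := fun M hM => by
  refine SymplecticGroup.mem_iff'.mpr (ext_of_dotProduct_mulVec fun x y => ?_)
  rw [← mulVec_mulVec, ← mulVec_mulVec, dotProduct_mulVec, vecMul_transpose,
    ← pairing_eq_dotProduct_J_mulVec, ← pairing_eq_dotProduct_J_mulVec,
    pairing_mulVec_of_mem_parityIsometries hM]

theorem offVec_eq_zero_iff {σ : SpMat g} (hσ : σ ∈ symplecticGroup (Fin g) (ZMod 2)) :
    offVec σ = 0 ↔ σᵀ ∈ parityIsometries g := by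
  change _ ↔ ∀ m, _
  simp only [charParity_transpose_mulVec hσ, add_eq_left]
  refine ⟨fun h m => ?_, eq_zero_of_forall_pairing_eq_zero⟩
  rw [h, pairing_eq_dotProduct_swap, zero_dotProduct]

def symplecticTransvection (w : Char2 g) : SpMat g := 1 + vecMulVec w (w ∘ Sum.swap)

theorem symplecticTransvection_mulVec (w m : Char2 g) :
    symplecticTransvection w *ᵥ m = m + pairing m w • w := by
  rw [symplecticTransvection, add_mulVec, one_mulVec, vecMulVec_mulVec, op_smul_eq_smul,
    dotProduct_comm, ← pairing_eq_dotProduct_swap]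

theorem symplecticTransvection_mem_parityIsometries {w : Char2 g} (hw : charParity w = 1) :
    symplecticTransvection w ∈ parityIsometries g := fun m => by
  rw [symplecticTransvection_mulVec]
  rcases ZMod.eq_zero_or_eq_one_of_two (pairing m w) with h | h
  · rw [h, zero_smul, add_zero]
  · rw [h, one_smul, charParity_add, hw, h, add_assoc, CharTwo.add_self_eq_zero, add_zero]

theorem symplecticTransvection_add_mulVec {u v : Char2 g} (h : pairing u v = 1) :
    symplecticTransvection (u + v) *ᵥ u = v := by
  rw [symplecticTransvection_mulVec, pairing_add_right, pairing_self, zero_add, h, one_smul,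
    ← add_assoc, ZModModule.add_self, zero_add]

theorem exists_isotropic_pairing_eq_one {u v : Char2 g} (hu : u ≠ 0) (hv : v ≠ 0)
    (hqu : charParity u = 0) (huv : pairing u v = 0) :
    ∃ w, charParity w = 0 ∧ pairing u w = 1 ∧ pairing v w = 1 := by
  obtain ⟨w, hwu, hwv⟩ : ∃ w, pairing u w = 1 ∧ pairing v w = 1 := by
    obtain ⟨x, hx⟩ := exists_pairing_eq_one hu
    obtain ⟨y, hy⟩ := exists_pairing_eq_one hv
    rcases ZMod.eq_zero_or_eq_one_of_two (pairing v x) with hvx | hvx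
    · rcases ZMod.eq_zero_or_eq_one_of_two (pairing u y) with huy | huy
      · exact ⟨x + y, by rw [pairing_add_right, hx, huy, add_zero],
          by rw [pairing_add_right, hvx, hy, zero_add]⟩
      · exact ⟨y, huy, hy⟩
    · exact ⟨x, hx, hvx⟩
  rcases ZMod.eq_zero_or_eq_one_of_two (charParity w) with hq | hq
  · exact ⟨w, hq, hwu, hwv⟩
  · refine ⟨w + u, ?_, ?_, ?_⟩
    · rw [charParity_add, hq, hqu, pairing_comm, hwu, add_zero, CharTwo.add_self_eq_zero]
    · rw [pairing_add_right, hwu, pairing_self, add_zero]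
    · rw [pairing_add_right, hwv, pairing_comm v, huv, add_zero]

theorem exists_mem_parityIsometries_mulVec_eq {u v : Char2 g} (hu : u ≠ 0) (hv : v ≠ 0)
    (hqu : charParity u = 0) (hqv : charParity v = 0) :
    ∃ M ∈ parityIsometries g, M *ᵥ u = v := by
  have transvect {x y : Char2 g} (hx : charParity x = 0) (hy : charParity y = 0)
      (hxy : pairing x y = 1) :
      symplecticTransvection (x + y) ∈ parityIsometries g ∧
        symplecticTransvection (x + y) *ᵥ x = y :=
    ⟨symplecticTransvection_mem_parityIsometries (by rw [charParity_add, hx, hy, hxy, zero_add,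
      zero_add]), symplecticTransvection_add_mulVec hxy⟩
  rcases ZMod.eq_zero_or_eq_one_of_two (pairing u v) with huv | huv
  · obtain ⟨w, hqw, huw, hvw⟩ := exists_isotropic_pairing_eq_one hu hv hqu huv
    obtain ⟨hM₁, hM₁u⟩ := transvect hqu hqw huw
    obtain ⟨hM₂, hM₂w⟩ := transvect hqw hqv (by rw [pairing_comm, hvw])
    exact ⟨_, mul_mem hM₂ hM₁, by rw [← mulVec_mulVec, hM₁u, hM₂w]⟩
  · exact ⟨_, transvect hqu hqv huv⟩

theorem mem_doubleCoset_of_not_mem_thetaGroup {σ τ : SpGrp g} (hσ : σ ∉ thetaGroup g)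
    (hτ : τ ∉ thetaGroup g) : σ ∈ DoubleCoset.doubleCoset τ (thetaGroup g) (thetaGroup g) := by
  rw [mem_thetaGroup_iff] at hσ hτ
  obtain ⟨M, hM, hMσ⟩ := exists_mem_parityIsometries_mulVec_eq hσ hτ
    (isEvenChar_offVec σ.2) (isEvenChar_offVec τ.2)
  have hMsp := parityIsometries_le_symplecticGroup hM
  let h : SpGrp g := ⟨Mᵀ, SymplecticGroup.transpose_mem hMsp⟩
  have hh : h ∈ thetaGroup g :=
    mem_thetaGroup_iff.mpr ((offVec_eq_zero_iff h.2).mpr (by rwa [transpose_transpose]))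
  have hστ : affAct σ 0 = affAct ((h * τ : SpGrp g) : SpMat g) 0 := by
    rw [affAct_coe_mul, affAct_zero (τ : SpMat g), ← hMσ, affAct_of_mem_thetaGroup hh,
      transpose_transpose, mulVec_mulVec, nonsing_inv_mul _ (SymplecticGroup.symplectic_det hMsp),
      one_mulVec, affAct_zero]
  refine DoubleCoset.mem_doubleCoset.mpr
    ⟨h, hh, (h * τ)⁻¹ * σ, ?_, (mul_inv_cancel_left (h * τ) σ).symm⟩
  change affAct _ 0 = 0
  rw [affAct_coe_mul, hστ, affAct_coe_inv_affAct]

theorem exists_thetaGroup_doubleCoset_cover (g : ℕ) : ∃ τ : SpGrp g, ∀ σ,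
    σ ∈ thetaGroup g ∨ σ ∈ DoubleCoset.doubleCoset τ (thetaGroup g) (thetaGroup g) := by
  by_cases hH : ∀ σ : SpGrp g, σ ∈ thetaGroup g
  · exact ⟨1, fun σ => .inl (hH σ)⟩
  · obtain ⟨τ, hτ⟩ := not_forall.mp hH
    exact ⟨τ, fun σ => or_iff_not_imp_left.mpr fun hσ =>
      mem_doubleCoset_of_not_mem_thetaGroup hσ hτ⟩

end DoubleCosets

section ThetaCharacter

variable {g : ℕ}

theorem sgn2_add (x y : ZMod 2) : sgn2 (x + y) = sgn2 x * sgn2 y := by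
  revert x y; decide

theorem epsChar_zero (σ : SpMat g) :
    epsChar 0 σ = sgn2 (trace (σ.toBlocks₁₂ᵀ * σ.toBlocks₂₁)) := by
  rw [epsChar, quadF, quadF, show aPart (0 : Char2 g) = 0 from rfl,
    show bPart (0 : Char2 g) = 0 from rfl, zero_dotProduct, zero_dotProduct, add_zero, add_zero]

theorem epsChar_zero_mul (σ : SpGrp g) {τ : SpGrp g} (hτ : τ ∈ thetaGroup g) :
    epsChar 0 ((σ * τ : SpGrp g) : SpMat g)
      = epsChar 0 (σ : SpMat g) * epsChar 0 (τ : SpMat g) := by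
  have hτ0 := mem_thetaGroup_iff.mp hτ
  have h₁ := σ.2
  have h₂ := τ.2
  rw [← fromBlocks_toBlocks (σ : SpMat g)] at h₁
  rw [← fromBlocks_toBlocks (τ : SpMat g)] at h₂ hτ0
  rw [offVec_fromBlocks] at hτ0
  rw [Submonoid.coe_mul, epsChar_zero, epsChar_zero, epsChar_zero, ← sgn2_add,
    ← SymplecticGroup.trace_offDiag_blocks_mul h₁ h₂
      (funext fun i => congrFun hτ0 (Sum.inr i)) (funext fun i => congrFun hτ0 (Sum.inl i))]
  conv_lhs => rw [← fromBlocks_toBlocks (σ : SpMat g), ← fromBlocks_toBlocks (τ : SpMat g),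
    fromBlocks_multiply]
  rw [toBlocks_fromBlocks₁₂, toBlocks_fromBlocks₂₁]

def thetaChar (σ : SpGrp g) : ℂ := epsChar 0 (σ : SpMat g)

theorem thetaChar_mul (σ : SpGrp g) {τ : SpGrp g} (hτ : τ ∈ thetaGroup g) :
    thetaChar (σ * τ) = thetaChar σ * thetaChar τ := by
  rw [thetaChar, epsChar_zero_mul σ hτ, Int.cast_mul]
  rfl

theorem thetaChar_one : thetaChar (1 : SpGrp g) = 1 := by
  rw [thetaChar, Submonoid.coe_one, epsChar_zero, ← fromBlocks_one, toBlocks_fromBlocks₁₂,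
    toBlocks_fromBlocks₂₁, Matrix.mul_zero, trace_zero, sgn2, if_pos rfl, Int.cast_one]

theorem thetaChar_inv_mul_self {h : SpGrp g} (hh : h ∈ thetaGroup g) :
    thetaChar h⁻¹ * thetaChar h = 1 := by
  rw [← thetaChar_mul _ hh, inv_mul_cancel, thetaChar_one]

end ThetaCharacter

section InducedRepresentation

variable {g : ℕ}

noncomputable instance : Fintype (SpGrp g) := Fintype.ofFinite _

theorem IndEps.apply_mul (f : IndEps g 0) {h : SpGrp g} (hh : h ∈ thetaGroup g) (x : SpGrp g) :
    (f : SpGrp g → ℂ) (h * x) = thetaChar h * (f : SpGrp g → ℂ) x :=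
  f.2 h x hh

noncomputable def epsIndicator (g : ℕ) : IndEps g 0 :=
  ⟨(thetaGroup g : Set (SpGrp g)).indicator thetaChar, fun h x (hh : h ∈ thetaGroup g) => by
    by_cases hx : x ∈ thetaGroup g
    · rw [Set.indicator_of_mem (mul_mem hh hx), Set.indicator_of_mem hx, thetaChar_mul h hx]
      rfl
    · rw [Set.indicator_of_notMem (mt ((thetaGroup g).mul_mem_cancel_left hh).mp hx),
        Set.indicator_of_notMem hx, mul_zero]⟩

theorem rTrans_epsIndicator {k : SpGrp g} (hk : k ∈ thetaGroup g) :
    rTrans g 0 k (epsIndicator g) = thetaChar k • epsIndicator g := by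
  ext x
  change (thetaGroup g : Set (SpGrp g)).indicator thetaChar (x * k)
    = thetaChar k * (thetaGroup g : Set (SpGrp g)).indicator thetaChar x
  by_cases hx : x ∈ thetaGroup g
  · rw [Set.indicator_of_mem (mul_mem hx hk), Set.indicator_of_mem hx, thetaChar_mul x hk, mul_comm]
  · rw [Set.indicator_of_notMem (mt ((thetaGroup g).mul_mem_cancel_right hk).mp hx),
      Set.indicator_of_notMem hx, mul_zero]

theorem sum_smul_rTrans_inv_epsIndicator (f : IndEps g 0) :
    ∑ x, (f : SpGrp g → ℂ) x • rTrans g 0 x⁻¹ (epsIndicator g)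
      = (Nat.card (thetaGroup g) : ℂ) • f := by
  classical
  ext y
  simp only [Submodule.coe_sum, Finset.sum_apply, Submodule.coe_smul, Pi.smul_apply, smul_eq_mul]
  change ∑ x, (f : SpGrp g → ℂ) x * (thetaGroup g : Set (SpGrp g)).indicator thetaChar (y * x⁻¹) = _
  rw [← ((Equiv.inv _).trans (Equiv.mulRight y)).sum_comp]
  simp only [Equiv.trans_apply, Equiv.inv_apply, Equiv.coe_mulRight, _root_.mul_inv_rev, inv_inv,
    mul_inv_cancel_left]
  have hterm (h : SpGrp g) : (f : SpGrp g → ℂ) (h⁻¹ * y)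
      * (thetaGroup g : Set (SpGrp g)).indicator thetaChar h
      = if h ∈ thetaGroup g then (f : SpGrp g → ℂ) y else 0 := by
    by_cases hh : h ∈ thetaGroup g
    · rw [Set.indicator_of_mem hh, if_pos hh, IndEps.apply_mul f (inv_mem hh), mul_right_comm,
        thetaChar_inv_mul_self hh, one_mul]
    · rw [Set.indicator_of_notMem hh, if_neg hh, mul_zero]
  rw [Finset.sum_congr rfl fun h _ => hterm h, ← Finset.sum_filter, Finset.sum_const, nsmul_eq_mul,
    Nat.card_eq_fintype_card, Fintype.card_subtype]

theorem span_range_rTrans_epsIndicator :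
    Submodule.span ℂ (Set.range fun x => rTrans g 0 x (epsIndicator g)) = ⊤ := by
  refine Submodule.eq_top_iff'.mpr fun f => ?_
  have hcard : (Nat.card (thetaGroup g) : ℂ) ≠ 0 := Nat.cast_ne_zero.mpr Nat.card_pos.ne'
  rw [← inv_smul_smul₀ hcard f, ← sum_smul_rTrans_inv_epsIndicator]
  exact Submodule.smul_mem _ _ (Submodule.sum_mem _ fun x _ =>
    Submodule.smul_mem _ _ (Submodule.subset_span ⟨x⁻¹, rfl⟩))

theorem IndEps.eq_zero_of_doubleCoset_cover {τ : SpGrp g}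
    (hτ : ∀ σ, σ ∈ thetaGroup g ∨ σ ∈ DoubleCoset.doubleCoset τ (thetaGroup g) (thetaGroup g))
    {f : IndEps g 0} (hf : ∀ k ∈ thetaGroup g, rTrans g 0 k f = thetaChar k • f)
    (hf₁ : (f : SpGrp g → ℂ) 1 = 0) (hfτ : (f : SpGrp g → ℂ) τ = 0) : f = 0 := by
  have apply_mul_right (x : SpGrp g) {k : SpGrp g} (hk : k ∈ thetaGroup g) :
      (f : SpGrp g → ℂ) (x * k) = thetaChar k * (f : SpGrp g → ℂ) x :=
    congrFun (congrArg Subtype.val (hf k hk)) x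
  ext σ
  rcases hτ σ with hσ | hσ
  · rw [← mul_one σ, IndEps.apply_mul f hσ, hf₁, mul_zero]
    rfl
  · obtain ⟨h, hh, k, hk, rfl⟩ := DoubleCoset.mem_doubleCoset.mp hσ
    rw [apply_mul_right _ hk, IndEps.apply_mul f hh, hfτ, mul_zero, mul_zero]
    rfl

end InducedRepresentation

section Equivariance

variable {g : ℕ} {m : Char2 g}

def equivariantEndos (g : ℕ) (m : Char2 g) : Submodule ℂ (IndEps g m →ₗ[ℂ] IndEps g m) where
  carrier := {φ | IsEquivariant g m φ}
  add_mem' {φ ψ} hφ hψ σ := by rw [LinearMap.add_comp, LinearMap.comp_add, hφ σ, hψ σ]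
  zero_mem' σ := by rw [LinearMap.zero_comp, LinearMap.comp_zero]
  smul_mem' c φ hφ σ := by rw [LinearMap.smul_comp, LinearMap.comp_smul, hφ σ]

theorem IsEquivariant.apply_rTrans {ψ : IndEps g m →ₗ[ℂ] IndEps g m} (hψ : IsEquivariant g m ψ)
    (σ : SpGrp g) (f : IndEps g m) : ψ (rTrans g m σ f) = rTrans g m σ (ψ f) :=
  LinearMap.congr_fun (hψ σ) f

theorem IsEquivariant.eq_zero_of_apply_epsIndicator_eq_zero {ψ : IndEps g 0 →ₗ[ℂ] IndEps g 0}
    (hψ : IsEquivariant g 0 ψ) (h : ψ (epsIndicator g) = 0) : ψ = 0 :=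
  LinearMap.ext_on_range span_range_rTrans_epsIndicator fun x => by
    rw [hψ.apply_rTrans, h, map_zero, LinearMap.zero_apply]

theorem IsEquivariant.rTrans_apply_epsIndicator {ψ : IndEps g 0 →ₗ[ℂ] IndEps g 0}
    (hψ : IsEquivariant g 0 ψ) {k : SpGrp g} (hk : k ∈ thetaGroup g) :
    rTrans g 0 k (ψ (epsIndicator g)) = thetaChar k • ψ (epsIndicator g) := by
  rw [← hψ.apply_rTrans, rTrans_epsIndicator hk, map_smul]

noncomputable def evalEpsIndicator (τ : SpGrp g) :
    (IndEps g 0 →ₗ[ℂ] IndEps g 0) →ₗ[ℂ] ℂ × ℂ where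
  toFun ψ := ((ψ (epsIndicator g) : SpGrp g → ℂ) 1, (ψ (epsIndicator g) : SpGrp g → ℂ) τ)
  map_add' _ _ := rfl
  map_smul' _ _ := rfl

theorem IsEquivariant.eq_zero_of_evalEpsIndicator_eq_zero {τ : SpGrp g}
    (hτ : ∀ σ, σ ∈ thetaGroup g ∨ σ ∈ DoubleCoset.doubleCoset τ (thetaGroup g) (thetaGroup g))
    {ψ : IndEps g 0 →ₗ[ℂ] IndEps g 0} (hψ : IsEquivariant g 0 ψ)
    (h : evalEpsIndicator τ ψ = 0) : ψ = 0 := by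
  obtain ⟨hψ₁, hψτ⟩ := Prod.mk_eq_zero.mp h
  exact hψ.eq_zero_of_apply_epsIndicator_eq_zero (IndEps.eq_zero_of_doubleCoset_cover hτ
    (fun _ hk => hψ.rTrans_apply_epsIndicator hk) hψ₁ hψτ)

end Equivariance

/-- `dim Hom_G(Ind_H^G(ε_H), Ind_H^G(ε_H)) ≤ 2`, where `H` is the
theta group: no three `G`-equivariant endomorphisms are linearly independent.
Hence `Ind_H^G(ε_H)` is irreducible or has exactly two non-isomorphic
irreducible components. -/
theorem dim_equivariant_endos_le_two (g : ℕ)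
    (φ : Fin 3 → (IndEps g 0 →ₗ[ℂ] IndEps g 0))
    (hφ : ∀ i, IsEquivariant g 0 (φ i)) :
    ¬ LinearIndependent ℂ φ := by
  obtain ⟨τ, hτ⟩ := exists_thetaGroup_doubleCoset_cover g
  intro hli
  obtain ⟨c, hc, i, hci⟩ := Fintype.not_linearIndependent_iff.mp
    fun h : LinearIndependent ℂ (evalEpsIndicator τ ∘ φ) => by
      simpa using h.fintype_card_le_finrank
  have hψ : ∑ j, c j • φ j ∈ equivariantEndos g 0 :=
    Submodule.sum_mem _ fun j _ => Submodule.smul_mem _ _ (hφ j)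
  have hker : evalEpsIndicator τ (∑ j, c j • φ j) = 0 := by
    simpa only [map_sum, map_smul, Function.comp_apply] using hc
  exact hci ((Fintype.linearIndependent_iff (R := ℂ) (v := φ)).mp hli c
    (IsEquivariant.eq_zero_of_evalEpsIndicator_eq_zero hτ hψ hker) i)
end

section
/- For a fixed nonzero characteristic m in F_2^{2g}, the number of even characteristics n with <m,n> = 0 exceeds the number of even characteristics n with <m,n> = 1 by exactly 2^{g-1}; in particular sum over even n of (-1)^{<m,n>} = 2^{g-1} for m even nonzero, while for m = 0 this sum equals 2^{g-1}(2^g+1). -/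
open Matrix BigOperators

-- helpers
lemma sgn2_add_one (x : ZMod 2) : sgn2 (x + 1) = - sgn2 x := by revert x; decide

lemma sgn2_mul_sgn2 (x y : ZMod 2) : sgn2 x * sgn2 y = sgn2 (x + y) := by
  revert x y; decide

lemma sum_sgn2_zero {V : Type*} [Fintype V] [AddCommGroup V]
    (f : V → ZMod 2) (hadd : ∀ x y, f (x + y) = f x + f y) (x₀ : V) (hx : f x₀ = 1) :
    ∑ v, sgn2 (f v) = 0 := by
  have h1 : ∑ v, sgn2 (f (v + x₀)) = ∑ v, sgn2 (f v) :=
    Fintype.sum_equiv (Equiv.addRight x₀) _ _ (fun v => rfl)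
  have h2 : ∀ v : V, sgn2 (f (v + x₀)) = - sgn2 (f v) := by
    intro v; rw [hadd, hx, sgn2_add_one]
  simp only [h2, Finset.sum_neg_distrib] at h1
  linarith

lemma sum_sgn2_dot (g : ℕ) :
    ∑ a : Fin g → ZMod 2, ∑ b : Fin g → ZMod 2, sgn2 (a ⬝ᵥ b) = 2 ^ g := by
  have key : ∀ a : Fin g → ZMod 2,
      (∑ b : Fin g → ZMod 2, sgn2 (a ⬝ᵥ b)) = if a = 0 then 2 ^ g else 0 := by
    intro a
    by_cases ha : a = 0
    · subst ha
      simp [zero_dotProduct, sgn2, Fintype.card_fun]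
    · rw [if_neg ha]
      obtain ⟨i, hi⟩ := Function.ne_iff.mp ha
      have hi1 : a i = 1 := by
        have : ∀ x : ZMod 2, x ≠ 0 → x = 1 := by decide
        exact this _ hi
      refine sum_sgn2_zero _ (fun x y => dotProduct_add a x y) (Pi.single i 1) ?_
      rw [dotProduct_single, hi1, one_mul]
  simp only [key]
  simp

lemma aPart_add {g : ℕ} (m n : Char2 g) : aPart (m + n) = aPart m + aPart n := rfl
lemma bPart_add {g : ℕ} (m n : Char2 g) : bPart (m + n) = bPart m + bPart n := rfl

/-- quadratic character sum over all characteristics. -/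
lemma sum_sgn2_q (g : ℕ) :
    ∑ n : Char2 g, sgn2 (aPart n ⬝ᵥ bPart n) = 2 ^ g := by
  rw [← Fintype.sum_equiv (Equiv.sumArrowEquivProdArrow (Fin g) (Fin g) (ZMod 2)).symm
    (fun p => sgn2 (p.1 ⬝ᵥ p.2))
    (fun n => sgn2 (aPart n ⬝ᵥ bPart n)) ?_]
  · rw [Fintype.sum_prod_type]; exact sum_sgn2_dot g
  · intro p
    have h1 : aPart ((Equiv.sumArrowEquivProdArrow (Fin g) (Fin g) (ZMod 2)).symm p) = p.1 := by
      funext i; simp [aPart, Equiv.sumArrowEquivProdArrow]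
    have h2 : bPart ((Equiv.sumArrowEquivProdArrow (Fin g) (Fin g) (ZMod 2)).symm p) = p.2 := by
      funext i; simp [bPart, Equiv.sumArrowEquivProdArrow]
    rw [h1, h2]

lemma pairing_add {g : ℕ} (m n k : Char2 g) :
    pairing m (n + k) = pairing m n + pairing m k := by
  simp only [pairing, aPart_add, bPart_add, dotProduct_add]
  ring

lemma exists_pairing_one {g : ℕ} (m : Char2 g) (hm : m ≠ 0) :
    ∃ n₀ : Char2 g, pairing m n₀ = 1 := by
  obtain ⟨j, hj⟩ := Function.ne_iff.mp hm
  have h01 : ∀ x : ZMod 2, x ≠ 0 → x = 1 := by decide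
  cases j with
  | inl i =>
      refine ⟨Pi.single (Sum.inr i) 1, ?_⟩
      have ha : aPart (Pi.single (Sum.inr i) (1 : ZMod 2)) = 0 := by
        funext k; simp [aPart, Pi.single_apply]
      have hb : bPart (Pi.single (Sum.inr i) (1 : ZMod 2)) = Pi.single i 1 := by
        funext k; simp [bPart, Pi.single_apply]
      rw [pairing, ha, hb, dotProduct_zero, dotProduct_single,
        add_zero, mul_one]
      exact h01 _ hj
  | inr i =>
      refine ⟨Pi.single (Sum.inl i) 1, ?_⟩
      have ha : aPart (Pi.single (Sum.inl i) (1 : ZMod 2)) = Pi.single i 1 := by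
        funext k; simp [aPart, Pi.single_apply]
      have hb : bPart (Pi.single (Sum.inl i) (1 : ZMod 2)) = 0 := by
        funext k; simp [bPart, Pi.single_apply]
      rw [pairing, ha, hb, dotProduct_zero, dotProduct_single,
        zero_add, mul_one]
      exact h01 _ hj

lemma sum_sgn2_pairing {g : ℕ} (m : Char2 g) (hm : m ≠ 0) :
    ∑ n : Char2 g, sgn2 (pairing m n) = 0 := by
  obtain ⟨n₀, hn₀⟩ := exists_pairing_one m hm
  exact sum_sgn2_zero _ (pairing_add m) n₀ hn₀

lemma key_id {g : ℕ} (m n : Char2 g) :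
    aPart (n + m) ⬝ᵥ bPart (n + m) + pairing m (n + m)
      = (aPart n ⬝ᵥ bPart n) + (aPart m ⬝ᵥ bPart m) := by
  simp only [pairing, aPart_add, bPart_add, dotProduct_add, add_dotProduct]
  rw [dotProduct_comm (bPart m) (aPart n), dotProduct_comm (bPart m) (aPart m)]
  generalize aPart n ⬝ᵥ bPart n = x
  generalize aPart n ⬝ᵥ bPart m = y
  generalize aPart m ⬝ᵥ bPart n = z
  generalize aPart m ⬝ᵥ bPart m = w
  revert x y z w; decide

lemma sum_sgn2_q_pairing {g : ℕ} (m : Char2 g) (hm : IsEvenChar m) :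
    ∑ n : Char2 g, sgn2 (aPart n ⬝ᵥ bPart n + pairing m n) = 2 ^ g := by
  have h1 : ∑ n : Char2 g, sgn2 (aPart (n + m) ⬝ᵥ bPart (n + m) + pairing m (n + m))
      = ∑ n : Char2 g, sgn2 (aPart n ⬝ᵥ bPart n + pairing m n) :=
    Fintype.sum_equiv (Equiv.addRight m) _ _ (fun v => rfl)
  rw [← h1]
  simp only [key_id]
  rw [show aPart m ⬝ᵥ bPart m = 0 from hm]
  simpa using sum_sgn2_q g

/-- for a fixed even nonzero characteristic `m`, the number of
even characteristics `n` with `<m,n> = 0` exceeds the number of even `n` with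
`<m,n> = 1` by exactly `2^{g-1}`; in particular `∑_{n even} (-1)^{<m,n>} =
2^{g-1}` for such `m`, while for `m = 0` this sum equals `2^{g-1}(2^g+1)`. -/
theorem pairing_count_even (g : ℕ) (hg : 1 ≤ g) :
    (∀ m : Char2 g, IsEvenChar m → m ≠ 0 →
      Nat.card {n : Char2 g // IsEvenChar n ∧ pairing m n = 0}
        = Nat.card {n : Char2 g // IsEvenChar n ∧ pairing m n = 1} + 2 ^ (g - 1)) ∧
    (∀ m : Char2 g, IsEvenChar m → m ≠ 0 →
      ∑ n : {n : Char2 g // IsEvenChar n}, eSign m n.1 = (2 : ℤ) ^ (g - 1)) ∧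
    (∑ n : {n : Char2 g // IsEvenChar n}, eSign (0 : Char2 g) n.1
      = 2 ^ (g - 1) * (2 ^ g + 1)) := by
  have hg' : g - 1 + 1 = g := by omega
  have h2g : (2 : ℤ) ^ g = 2 * 2 ^ (g - 1) := by
    conv_lhs => rw [← hg']
    rw [pow_succ]; ring
  set N : ℕ := (Finset.univ.filter (IsEvenChar (g := g))).card with hN
  -- the count of even characteristics
  have hD : (2 : ℤ) * N = 2 ^ (2 * g) + 2 ^ g := by
    have h1 : ∑ n : Char2 g, ((1 : ℤ) + sgn2 (aPart n ⬝ᵥ bPart n))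
        = 2 ^ (2 * g) + 2 ^ g := by
      rw [Finset.sum_add_distrib, sum_sgn2_q]
      congr 1
      simp [Finset.card_univ, Fintype.card_fun, two_mul, pow_add]
    have h2 : ∀ n : Char2 g, (1 : ℤ) + sgn2 (aPart n ⬝ᵥ bPart n)
        = if IsEvenChar n then 2 else 0 := by
      intro n
      by_cases h : IsEvenChar n
      · rw [if_pos h, show aPart n ⬝ᵥ bPart n = 0 from h]; simp [sgn2]
      · rw [if_neg h]
        have : aPart n ⬝ᵥ bPart n ≠ 0 := h
        simp [sgn2, this]
    rw [← h1]
    simp only [h2]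
    rw [← Finset.sum_filter, Finset.sum_const]
    simp [hN, nsmul_eq_mul, mul_comm]
  -- the signed sum over even characteristics, as a filter sum
  have hE : ∀ m : Char2 g, IsEvenChar m → m ≠ 0 →
      ∑ n ∈ Finset.univ.filter (IsEvenChar (g := g)), sgn2 (pairing m n)
        = 2 ^ (g - 1) := by
    intro m hme hm0
    have key : (2 : ℤ) * ∑ n ∈ Finset.univ.filter (IsEvenChar (g := g)),
        sgn2 (pairing m n) = 2 ^ g := by
      rw [Finset.mul_sum]
      have h1 : ∑ n ∈ Finset.univ.filter (IsEvenChar (g := g)), 2 * sgn2 (pairing m n)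
          = ∑ n : Char2 g, (if IsEvenChar n then 2 * sgn2 (pairing m n) else 0) :=
        Finset.sum_filter _ _
      have h2 : ∀ n : Char2 g, (if IsEvenChar n then 2 * sgn2 (pairing m n) else 0)
          = sgn2 (pairing m n) + sgn2 (aPart n ⬝ᵥ bPart n + pairing m n) := by
        intro n
        by_cases h : IsEvenChar n
        · rw [if_pos h, show aPart n ⬝ᵥ bPart n = 0 from h, zero_add]; ring
        · rw [if_neg h]
          have hne : aPart n ⬝ᵥ bPart n ≠ 0 := h
          have h1' : aPart n ⬝ᵥ bPart n = 1 := by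
            have : ∀ x : ZMod 2, x ≠ 0 → x = 1 := by decide
            exact this _ hne
          rw [h1']
          have hx : ∀ x : ZMod 2, sgn2 x + sgn2 (1 + x) = 0 := by decide
          linarith [hx (pairing m n)]
      rw [h1]
      simp only [h2]
      rw [Finset.sum_add_distrib, sum_sgn2_pairing m hm0, zero_add,
        sum_sgn2_q_pairing m hme]
    rw [h2g] at key
    linarith
  -- conversion between subtype sums and filter sums
  have hconv : ∀ m : Char2 g, ∑ n : {n : Char2 g // IsEvenChar n}, eSign m n.1
      = ∑ n ∈ Finset.univ.filter (IsEvenChar (g := g)), sgn2 (pairing m n) := by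
    intro m
    exact (Finset.sum_subtype (Finset.univ.filter (IsEvenChar (g := g)))
      (fun x => by simp) (fun n => eSign m n)).symm
  refine ⟨?_, ?_, ?_⟩
  · -- part 1
    intro m hme hm0
    have hsum := hE m hme hm0
    have hsplit : ∑ n ∈ Finset.univ.filter (IsEvenChar (g := g)), sgn2 (pairing m n)
        = ((Finset.univ.filter (fun n : Char2 g => IsEvenChar n ∧ pairing m n = 0)).card : ℤ)
          - ((Finset.univ.filter (fun n : Char2 g => IsEvenChar n ∧ pairing m n = 1)).card : ℤ) := by
      have : ∀ n : Char2 g, sgn2 (pairing m n)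
          = if pairing m n = 0 then (1 : ℤ) else -1 := fun n => rfl
      simp only [this]
      rw [Finset.sum_ite, Finset.sum_const, Finset.sum_const, Finset.filter_filter,
        Finset.filter_filter]
      have hflt : (Finset.univ.filter (fun n : Char2 g => IsEvenChar n ∧ ¬pairing m n = 0))
          = Finset.univ.filter (fun n : Char2 g => IsEvenChar n ∧ pairing m n = 1) := by
        apply Finset.filter_congr
        intro n _
        have : ∀ x : ZMod 2, (¬x = 0) ↔ x = 1 := by decide
        simp [this]
      rw [hflt]
      ring
    have hc0 : Nat.card {n : Char2 g // IsEvenChar n ∧ pairing m n = 0}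
        = (Finset.univ.filter (fun n : Char2 g => IsEvenChar n ∧ pairing m n = 0)).card := by
      rw [Nat.card_eq_fintype_card, Fintype.card_subtype]
    have hc1 : Nat.card {n : Char2 g // IsEvenChar n ∧ pairing m n = 1}
        = (Finset.univ.filter (fun n : Char2 g => IsEvenChar n ∧ pairing m n = 1)).card := by
      rw [Nat.card_eq_fintype_card, Fintype.card_subtype]
    rw [hc0, hc1]
    rw [hsplit] at hsum
    have : ((Finset.univ.filter (fun n : Char2 g => IsEvenChar n ∧ pairing m n = 0)).card : ℤ)
        = ((Finset.univ.filter (fun n : Char2 g => IsEvenChar n ∧ pairing m n = 1)).card : ℤ)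
          + 2 ^ (g - 1) := by linarith
    exact_mod_cast this
  · -- part 2
    intro m hme hm0
    rw [hconv m]
    exact hE m hme hm0
  · -- part 3
    have hzero : ∀ n : Char2 g, eSign (0 : Char2 g) n = 1 := by
      intro n
      have ha : aPart (0 : Char2 g) = 0 := rfl
      have hb : bPart (0 : Char2 g) = 0 := rfl
      simp [eSign, pairing, ha, hb, sgn2]
    simp only [hzero]
    rw [Finset.sum_const, Finset.card_univ, Fintype.card_subtype]
    have : (2 : ℤ) * ((2:ℤ) ^ (g - 1) * (2 ^ g + 1)) = 2 ^ (2 * g) + 2 ^ g := by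
      rw [two_mul g, pow_add, h2g]
      ring
    have hNZ : (N : ℤ) = 2 ^ (g - 1) * (2 ^ g + 1) := by linarith
    simpa [hN, nsmul_eq_mul] using hNZ
end
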